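/- arXiv:1302.2829 — 2 statements merged into one kernel-verified Lean document; each statement's English description precedes it below -/
import Mathlib

section
/- (Lemma A.1, second inequality) Let 0 < t < s be real numbers, let θ ∈ ℂ with |θ| ≤ 1/30, let x ∈ ℝ³ and j ∈ {1,2,3}. Then ∑_{λ∈{0,1}} ∫_{{k∈ℝ³ : t ≤ |k| ≤ s}} |G(θ)_j(x,(k,λ))|² / |k| d³k ≤ α³ · min( C_{1,ω}² , C₂² · (s−t) ). -/
open MeasureTheory

noncomputable section

/-- `ℝ³` as a Euclidean space. -/
abbrev R3 : Type := EuclideanSpace ℝ (Fin 3)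

/-- The coupling function `G(θ)(x,(k,λ))`, `j`-th component. -/
def Gfun (α : ℝ) (ε : R3 → Fin 2 → Fin 3 → ℂ) (θ : ℂ)
    (x k : R3) (lam : Fin 2) (j : Fin 3) : ℂ :=
  ((α ^ ((3:ℝ)/2) / (2 * Real.pi) ^ ((3:ℝ)/2) : ℝ) : ℂ) * Complex.exp (-θ) *
    Complex.exp (-(Complex.exp (-(2*θ))) * ((‖k‖ ^ 2 : ℝ) : ℂ)) *
    (((2 * ‖k‖) ^ (-(1:ℝ)/2) : ℝ) : ℂ) *
    Complex.exp (-Complex.I * (α : ℂ) * ((inner ℝ k x : ℝ) : ℂ)) *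
    ε k lam j

/-- The polarization vectors form an a.e. orthonormal transversal family. -/
def Polarization (ε : R3 → Fin 2 → Fin 3 → ℂ) : Prop :=
  Measurable ε ∧
  ∀ᵐ k ∂(volume : Measure R3), k ≠ 0 →
    ∀ lam mu : Fin 2,
      (∑ j : Fin 3, (starRingEnd ℂ) (ε k lam j) * ε k mu j) = (if lam = mu then 1 else 0) ∧
      (∑ j : Fin 3, ((k j : ℝ) : ℂ) * ε k lam j) = 0

def C1 : ℝ := Real.exp (3/4) / (2 * Real.pi)

def C2 : ℝ := Real.sqrt 2 * Real.exp (1/4) / (2 * Real.pi)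

def C1om : ℝ := Real.exp (1/2) * Real.pi ^ ((1:ℝ)/4) / (2 ^ ((1:ℝ)/4) * (2 * Real.pi))

/-!
For `‖θ‖ ≤ 1/30` one has `Re θ ≥ -1/30` and `Re e^{-2θ} ≥ 1/2`, so `|G(θ)_j|² / |k|` is
dominated by the radial function `α³ e^{1/15} (2π)⁻³ e^{-|k|²} / (2|k|²)`. In polar coordinates
the factor `|k|⁻²` cancels the Jacobian `4π|k|²`, which leaves the Gaussian integral
`∫_t^s e^{-r²} dr`; it is at most both `√π / 2` and `s - t`.
-/

open Real Set

theorem integral_annulus_eq_integral_Icc {t : ℝ} (s : ℝ) (ht : 0 < t) (f : ℝ → ℝ) :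
    ∫ k in {k : R3 | t ≤ ‖k‖ ∧ ‖k‖ ≤ s}, f ‖k‖ = 4 * π * ∫ r in Icc t s, r ^ 2 * f r := by
  have hmeas : MeasurableSet {k : R3 | t ≤ ‖k‖ ∧ ‖k‖ ≤ s} :=
    measurableSet_Icc.preimage measurable_norm
  have hind : {k : R3 | t ≤ ‖k‖ ∧ ‖k‖ ≤ s}.indicator (fun k => f ‖k‖) =
      fun k : R3 => (Icc t s).indicator f ‖k‖ := rfl
  have hradial : (Ioi 0).indicator (fun r => r ^ 2 * (Icc t s).indicator f r) =
      (Icc t s).indicator (fun r => r ^ 2 * f r) := by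
    ext r
    by_cases hr : r ∈ Icc t s
    · simp [hr, ht.trans_le hr.1]
    · simp [hr]
  rw [← integral_indicator hmeas, hind,
    integral_fun_norm_addHaar, ← integral_indicator measurableSet_Ioi]
  simp only [finrank_euclideanSpace_fin, measureReal_def, EuclideanSpace.volume_ball_fin_three,
    smul_eq_mul, nsmul_eq_mul, hradial, integral_indicator measurableSet_Icc]
  rw [ENNReal.toReal_mul, ENNReal.toReal_ofReal (by positivity)]
  norm_num
  ring

theorem half_le_re_exp_neg_two_mul {θ : ℂ} (hθ : ‖θ‖ ≤ 1/30) :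
    1/2 ≤ (Complex.exp (-(2 * θ))).re := by
  have h2θ : ‖-(2 * θ)‖ ≤ 1/15 := by
    rw [norm_neg, norm_mul, Complex.norm_two]; linarith
  have hclose : ‖Complex.exp (-(2 * θ)) - 1‖ ≤ 2/15 :=
    (Complex.norm_exp_sub_one_le (h2θ.trans (by norm_num))).trans (by linarith)
  have hre := (Complex.abs_re_le_norm _).trans hclose
  rw [Complex.sub_re, Complex.one_re, abs_le] at hre
  linarith [hre.1]

theorem norm_Gfun_sq {α : ℝ} (hα : 0 ≤ α) (ε : R3 → Fin 2 → Fin 3 → ℂ) (θ : ℂ) (x k : R3)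
    (lam : Fin 2) (j : Fin 3) :
    ‖Gfun α ε θ x k lam j‖ ^ 2 = α ^ 3 / (2 * π) ^ 3 * exp (-2 * θ.re) *
      exp (-2 * (Complex.exp (-(2 * θ))).re * ‖k‖ ^ 2) * (2 * ‖k‖)⁻¹ * ‖ε k lam j‖ ^ 2 := by
  have hsq {a : ℝ} (ha : 0 ≤ a) (p : ℝ) : (a ^ p) ^ 2 = a ^ (2 * p) := by
    rw [← rpow_natCast, ← rpow_mul ha, mul_comm]; norm_num
  have hexp (y : ℝ) : exp y ^ 2 = exp (2 * y) := by rw [← exp_nat_mul]; norm_num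
  simp only [Gfun, norm_mul, norm_div, Complex.norm_exp, Complex.norm_real, Real.norm_eq_abs,
    mul_pow, sq_abs, div_pow, hsq hα, hsq (by positivity : (0:ℝ) ≤ 2 * π),
    hsq (by positivity : (0:ℝ) ≤ 2 * ‖k‖), hexp, Complex.neg_re,
    Complex.mul_re, Complex.I_re, Complex.ofReal_re, Complex.ofReal_im]
  rw [show (2:ℝ) * (3/2) = (3:ℕ) by norm_num, show (2:ℝ) * (-1/2) = -1 by norm_num,
    rpow_natCast, rpow_natCast, rpow_neg_one]
  simp only [mul_zero, sub_zero, neg_zero, zero_mul, exp_zero, mul_one]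
  ring_nf

theorem norm_Gfun_sq_div_le {α : ℝ} (hα : 0 ≤ α) (ε : R3 → Fin 2 → Fin 3 → ℂ) {θ : ℂ}
    (hθ : ‖θ‖ ≤ 1/30) (x k : R3) (lam : Fin 2) (j : Fin 3) (hε : ‖ε k lam j‖ ≤ 1) :
    ‖Gfun α ε θ x k lam j‖ ^ 2 / ‖k‖ ≤
      α ^ 3 * exp (1/15) / (2 * π) ^ 3 * (exp (-‖k‖ ^ 2) / (2 * ‖k‖ ^ 2)) := by
  have hθre : exp (-2 * θ.re) ≤ exp (1/15) :=
    exp_le_exp.2 (by linarith [neg_abs_le θ.re, Complex.abs_re_le_norm θ])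
  have hgauss : exp (-2 * (Complex.exp (-(2 * θ))).re * ‖k‖ ^ 2) ≤ exp (-‖k‖ ^ 2) :=
    exp_le_exp.2 (by nlinarith [half_le_re_exp_neg_two_mul hθ, sq_nonneg ‖k‖])
  have hε2 : ‖ε k lam j‖ ^ 2 ≤ 1 := pow_le_one₀ (norm_nonneg _) hε
  calc ‖Gfun α ε θ x k lam j‖ ^ 2 / ‖k‖
      = α ^ 3 / (2 * π) ^ 3 * exp (-2 * θ.re) * exp (-2 * (Complex.exp (-(2 * θ))).re * ‖k‖ ^ 2)
          * ‖ε k lam j‖ ^ 2 * (2 * ‖k‖ ^ 2)⁻¹ := by rw [norm_Gfun_sq hα]; ring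
    _ ≤ α ^ 3 / (2 * π) ^ 3 * exp (1/15) * exp (-‖k‖ ^ 2) * 1 * (2 * ‖k‖ ^ 2)⁻¹ := by gcongr
    _ = α ^ 3 * exp (1/15) / (2 * π) ^ 3 * (exp (-‖k‖ ^ 2) / (2 * ‖k‖ ^ 2)) := by ring

theorem norm_le_one_of_sum_conj_mul_self_eq_one {ι : Type*} [Fintype ι] {v : ι → ℂ}
    (hv : ∑ i, (starRingEnd ℂ) (v i) * v i = 1) (i : ι) : ‖v i‖ ≤ 1 := by
  have hsum : ∑ i, ‖v i‖ ^ 2 = 1 := by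
    simpa only [Complex.conj_mul', ← Complex.ofReal_pow, ← Complex.ofReal_sum,
      Complex.ofReal_eq_one] using hv
  have hi : ‖v i‖ ^ 2 ≤ 1 :=
    hsum ▸ Finset.single_le_sum (fun i _ => sq_nonneg ‖v i‖) (Finset.mem_univ i)
  exact (sq_le_one_iff₀ (norm_nonneg _)).1 hi

theorem Polarization.ae_norm_le_one {ε : R3 → Fin 2 → Fin 3 → ℂ} (hε : Polarization ε) :
    ∀ᵐ k, k ≠ 0 → ∀ lam j, ‖ε k lam j‖ ≤ 1 := by
  filter_upwards [hε.2] with k hk hk0 lam j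
  exact norm_le_one_of_sum_conj_mul_self_eq_one (by simpa using (hk hk0 lam lam).1) j

theorem integral_Icc_exp_neg_sq_le_sub {t s : ℝ} (hts : t ≤ s) :
    ∫ r in Icc t s, exp (-r ^ 2) ≤ s - t := by
  calc ∫ r in Icc t s, exp (-r ^ 2)
      ≤ ∫ _ in Icc t s, (1 : ℝ) :=
        setIntegral_mono_on (by fun_prop : Continuous fun r : ℝ => exp (-r ^ 2)).integrableOn_Icc
          (integrableOn_const (by simp)) measurableSet_Icc
          fun r _ => exp_le_one_iff.2 (neg_nonpos.2 (sq_nonneg r))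
    _ = s - t := by simp [hts]

theorem integral_Icc_exp_neg_sq_le_sqrt_pi_div_two {t : ℝ} (s : ℝ) (ht : 0 ≤ t) :
    ∫ r in Icc t s, exp (-r ^ 2) ≤ √π / 2 := by
  have hint : IntegrableOn (fun r : ℝ => exp (-r ^ 2)) (Ici 0) := by
    simpa using (integrable_exp_neg_mul_sq one_pos).integrableOn
  calc ∫ r in Icc t s, exp (-r ^ 2)
      ≤ ∫ r in Ici 0, exp (-r ^ 2) :=
        setIntegral_mono_set hint (.of_forall fun r => (exp_pos _).le)
          (LE.le.eventuallyLE fun r hr => ht.trans hr.1)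
    _ = √π / 2 := by simpa [integral_Ici_eq_integral_Ioi] using integral_gaussian_Ioi 1

theorem C1om_sq : C1om ^ 2 = exp 1 * √π / (√2 * (2 * π) ^ 2) := by
  have hquarter {a : ℝ} (ha : 0 ≤ a) : (a ^ ((1:ℝ)/4)) ^ 2 = √a := by
    rw [← rpow_natCast, ← rpow_mul ha, sqrt_eq_rpow]; norm_num
  rw [C1om, div_pow, mul_pow, mul_pow, hquarter pi_pos.le, hquarter zero_le_two, ← exp_nat_mul]
  norm_num

theorem C2_sq : C2 ^ 2 = 2 * exp (1/2) / (2 * π) ^ 2 := by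
  rw [C2, div_pow, mul_pow, sq_sqrt zero_le_two, ← exp_nat_mul]
  norm_num

theorem sqrt_two_le_exp_half : √2 ≤ exp (1/2) := by
  rw [sqrt_le_left (exp_pos _).le, ← exp_nat_mul]
  norm_num
  linarith [add_one_le_exp 1]

theorem two_mul_exp_mul_div_le_min {I s t : ℝ} (hI_gauss : I ≤ √π / 2) (hI_len : I ≤ s - t)
    (hts : t ≤ s) :
    2 * exp (1/15) * I / (2 * π) ^ 2 ≤ min (C1om ^ 2) (C2 ^ 2 * (s - t)) := by
  have hexp : exp (1/15) ≤ exp (1/2) := exp_le_exp.2 (by norm_num)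
  refine le_min ?_ ?_
  · calc 2 * exp (1/15) * I / (2 * π) ^ 2 ≤ 2 * exp (1/15) * (√π / 2) / (2 * π) ^ 2 := by gcongr
      _ = exp (1/15) * √2 * √π / (√2 * (2 * π) ^ 2) := by field_simp
      _ ≤ exp (1/2) * exp (1/2) * √π / (√2 * (2 * π) ^ 2) := by gcongr; exact sqrt_two_le_exp_half
      _ = C1om ^ 2 := by rw [C1om_sq, ← exp_add]; norm_num
  · rw [C2_sq]
    have hst : 0 ≤ s - t := sub_nonneg.2 hts
    calc 2 * exp (1/15) * I / (2 * π) ^ 2 ≤ 2 * exp (1/15) * (s - t) / (2 * π) ^ 2 := by gcongr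
      _ ≤ 2 * exp (1/2) * (s - t) / (2 * π) ^ 2 := by gcongr
      _ = 2 * exp (1/2) / (2 * π) ^ 2 * (s - t) := by ring

theorem integral_annulus_norm_Gfun_sq_div_le {α : ℝ} (hα : 0 ≤ α) (ε : R3 → Fin 2 → Fin 3 → ℂ)
    {θ : ℂ} (hθ : ‖θ‖ ≤ 1/30) (x : R3) (lam : Fin 2) (j : Fin 3) {t : ℝ} (s : ℝ) (ht : 0 < t)
    (hε : ∀ᵐ k, k ≠ 0 → ‖ε k lam j‖ ≤ 1) :
    ∫ k in {k : R3 | t ≤ ‖k‖ ∧ ‖k‖ ≤ s}, ‖Gfun α ε θ x k lam j‖ ^ 2 / ‖k‖ ≤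
      α ^ 3 * exp (1/15) / (2 * π) ^ 2 * ∫ r in Icc t s, exp (-r ^ 2) := by
  set c := α ^ 3 * exp (1/15) / (2 * π) ^ 3 with hc
  have hmeas : MeasurableSet {k : R3 | t ≤ ‖k‖ ∧ ‖k‖ ≤ s} :=
    measurableSet_Icc.preimage measurable_norm
  have hcompact : IsCompact {k : R3 | t ≤ ‖k‖ ∧ ‖k‖ ≤ s} :=
    (isCompact_closedBall 0 s).of_isClosed_subset (isClosed_Icc.preimage continuous_norm)
      fun k hk => mem_closedBall_zero_iff.2 hk.2
  have hbound_int : IntegrableOn (fun k : R3 => c * (exp (-‖k‖ ^ 2) / (2 * ‖k‖ ^ 2)))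
      {k : R3 | t ≤ ‖k‖ ∧ ‖k‖ ≤ s} :=
    ContinuousOn.integrableOn_compact hcompact <| continuousOn_const.mul <|
      (by fun_prop : Continuous fun k : R3 => exp (-‖k‖ ^ 2)).continuousOn.div (by fun_prop)
        fun k hk => by have := ht.trans_le hk.1; positivity
  have hbound_eq : ∫ k in {k : R3 | t ≤ ‖k‖ ∧ ‖k‖ ≤ s}, c * (exp (-‖k‖ ^ 2) / (2 * ‖k‖ ^ 2)) =
      α ^ 3 * exp (1/15) / (2 * π) ^ 2 * ∫ r in Icc t s, exp (-r ^ 2) := by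
    rw [integral_annulus_eq_integral_Icc s ht fun r => c * (exp (-r ^ 2) / (2 * r ^ 2)),
      setIntegral_congr_fun measurableSet_Icc (g := fun r => c / 2 * exp (-r ^ 2))
        fun r hr => by have := ht.trans_le hr.1; field_simp,
      integral_const_mul, hc]
    field_simp
    ring
  calc ∫ k in {k : R3 | t ≤ ‖k‖ ∧ ‖k‖ ≤ s}, ‖Gfun α ε θ x k lam j‖ ^ 2 / ‖k‖
      ≤ ∫ k in {k : R3 | t ≤ ‖k‖ ∧ ‖k‖ ≤ s}, c * (exp (-‖k‖ ^ 2) / (2 * ‖k‖ ^ 2)) := by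
        refine integral_mono_of_nonneg (.of_forall fun k => by positivity) hbound_int ?_
        filter_upwards [ae_restrict_of_ae hε, ae_restrict_mem hmeas] with k hk hkA
        exact norm_Gfun_sq_div_le hα ε hθ x k lam j (hk (norm_pos_iff.1 (ht.trans_le hkA.1)))
    _ = _ := hbound_eq

theorem lemmaA1_second_general
    (α : ℝ) (hα0 : 0 < α)
    (ε : R3 → Fin 2 → Fin 3 → ℂ) (hε : Polarization ε)
    (s t : ℝ) (ht : 0 < t) (hts : t < s)
    (θ : ℂ) (hθ : ‖θ‖ ≤ 1/30)
    (x : R3) (j : Fin 3) :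
    (∑ lam : Fin 2, ∫ k in {k : R3 | t ≤ ‖k‖ ∧ ‖k‖ ≤ s},
        ‖Gfun α ε θ x k lam j‖ ^ 2 / ‖k‖)
      ≤ α ^ 3 * min (C1om ^ 2) (C2 ^ 2 * (s - t)) := by
  set I := ∫ r in Icc t s, exp (-r ^ 2)
  have hpol (lam : Fin 2) := integral_annulus_norm_Gfun_sq_div_le hα0.le ε hθ x lam j s ht
    (hε.ae_norm_le_one.mono fun k hk hk0 => hk hk0 lam j)
  calc (∑ lam : Fin 2, ∫ k in {k : R3 | t ≤ ‖k‖ ∧ ‖k‖ ≤ s}, ‖Gfun α ε θ x k lam j‖ ^ 2 / ‖k‖)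
      ≤ ∑ _lam : Fin 2, α ^ 3 * exp (1/15) / (2 * π) ^ 2 * I :=
        Finset.sum_le_sum fun lam _ => hpol lam
    _ = α ^ 3 * (2 * exp (1/15) * I / (2 * π) ^ 2) := by rw [Fin.sum_univ_two]; ring
    _ ≤ α ^ 3 * min (C1om ^ 2) (C2 ^ 2 * (s - t)) := by
      gcongr
      exact two_mul_exp_mul_div_le_min (integral_Icc_exp_neg_sq_le_sqrt_pi_div_two s ht.le)
        (integral_Icc_exp_neg_sq_le_sub hts.le) hts.le

/-- Lemma A.1, second inequality. -/
theorem lemmaA1_second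
    (α : ℝ) (hα0 : 0 < α) (hα1 : α ≤ 1)
    (ε : R3 → Fin 2 → Fin 3 → ℂ) (hε : Polarization ε)
    (s t : ℝ) (ht : 0 < t) (hts : t < s)
    (θ : ℂ) (hθ : ‖θ‖ ≤ 1/30)
    (x : R3) (j : Fin 3) :
    (∑ lam : Fin 2, ∫ k in {k : R3 | t ≤ ‖k‖ ∧ ‖k‖ ≤ s},
        ‖Gfun α ε θ x k lam j‖ ^ 2 / ‖k‖)
      ≤ α ^ 3 * min (C1om ^ 2) (C2 ^ 2 * (s - t)) :=
  lemmaA1_second_general α hα0 ε hε s t ht hts θ hθ x j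

end
end

section
/- (Remark A.3, first estimate) For every m ∈ {−1, 0, 1, 2}, every real 0 < t < s, every θ ∈ ℂ with |θ| ≤ 1/30, every x ∈ ℝ³ and j ∈ {1,2,3}: ∑_{λ∈{0,1}} ∫_{{k∈ℝ³ : t ≤ |k| ≤ s}} |k|^m · |𝔾(θ)_j(x,(k,λ))|² · (1+|x|²)^{−1} d³k ≤ α³ · C'² · s^{m+4}. -/
open MeasureTheory

noncomputable section

def CA : ℝ := Real.sqrt (Real.exp 1 / 2) * max (max C1 C1om) C2

/-- The sup norm of the first derivative, `‖η'‖_∞`. -/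
def supD (η : ℝ → ℝ) : ℝ := ⨆ r : ℝ, |deriv η r|

/-- The sup norm of the second derivative, `‖η''‖_∞`. -/
def supD2 (η : ℝ → ℝ) : ℝ := ⨆ r : ℝ, |deriv (deriv η) r|

/-- The cutoff function `η`: smooth, nonincreasing on `[0,∞)`, `η = 1` on `(-∞,1]`,
`η = 0` on `[2,∞)`. -/
def Cutoff (η : ℝ → ℝ) : Prop :=
  ContDiff ℝ (⊤ : ℕ∞) η ∧ AntitoneOn η (Set.Ici 0) ∧ (∀ r : ℝ, r ≤ 1 → η r = 1) ∧
    (∀ r : ℝ, 2 ≤ r → η r = 0)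

/-- The function `Q(θ)(x,(k,λ)) = G(θ)(0,(k,λ)) · (η(|x||k|) e^θ x)`. -/
def Qfun (α : ℝ) (ε : R3 → Fin 2 → Fin 3 → ℂ) (η : ℝ → ℝ) (θ : ℂ)
    (x k : R3) (lam : Fin 2) : ℂ :=
  ∑ j : Fin 3, Gfun α ε θ 0 k lam j *
    (((η (‖x‖ * ‖k‖) : ℝ) : ℂ) * Complex.exp θ * ((x j : ℝ) : ℂ))

/-- The Pauli–Fierz coupling function `𝔾(θ)_j = G(θ)_j − e^{−θ} ∂_{x_j} Q(θ)`. -/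
def GPF (α : ℝ) (ε : R3 → Fin 2 → Fin 3 → ℂ) (η : ℝ → ℝ) (θ : ℂ)
    (x k : R3) (lam : Fin 2) (j : Fin 3) : ℂ :=
  Gfun α ε θ x k lam j -
    Complex.exp (-θ) *
      fderiv ℝ (fun y : R3 => Qfun α ε η θ y k lam) x (EuclideanSpace.single j (1:ℝ))

def C' (η : ℝ → ℝ) : ℝ := Real.sqrt 3 * CA * (4 + 4 * supD η + 2 * supD2 η)

/-! ### Auxiliary lemmas -/

section Aux

lemma hasFDerivAt_nrm {x : R3} (hx : x ≠ 0) :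
    HasFDerivAt (fun y : R3 => ‖y‖) (‖x‖⁻¹ • (innerSL ℝ x)) x := by
  have hq : HasFDerivAt (fun y : R3 => (inner ℝ y y : ℝ))
      ((fderivInnerCLM ℝ (x, x)).comp ((ContinuousLinearMap.id ℝ R3).prod
        (ContinuousLinearMap.id ℝ R3))) x :=
    (hasFDerivAt_id x).inner ℝ (hasFDerivAt_id x)
  have hpos : (0:ℝ) < (inner ℝ x x : ℝ) := by
    rw [real_inner_self_eq_norm_sq]
    exact pow_pos (norm_pos_iff.mpr hx) 2
  have hs : HasDerivAt Real.sqrt (1 / (2 * Real.sqrt (inner ℝ x x : ℝ))) (inner ℝ x x : ℝ) :=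
    Real.hasDerivAt_sqrt (ne_of_gt hpos)
  have h := HasDerivAt.comp_hasFDerivAt (f := fun y : R3 => (inner ℝ y y : ℝ)) x hs hq
  have hnorm : (fun y : R3 => ‖y‖) = fun y => Real.sqrt (inner ℝ y y : ℝ) := by
    funext y; rw [real_inner_self_eq_norm_sq]; simp [Real.sqrt_sq (norm_nonneg y)]
  rw [hnorm]
  refine h.congr_fderiv (Eq.symm ?_)
  refine ContinuousLinearMap.ext fun v => ?_
  have hsq : Real.sqrt (∑ i, x i * x i) = ‖x‖ := by
    have : (inner ℝ x x : ℝ) = ∑ i, x i * x i := by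
      simp only [PiLp.inner_apply, RCLike.inner_apply, conj_trivial]
    rw [← this, real_inner_self_eq_norm_sq]; exact Real.sqrt_sq (norm_nonneg x)
  have hn0 : ‖x‖ ≠ 0 := norm_ne_zero_iff.mpr hx
  simp [fderivInnerCLM, real_inner_comm x v]
  have hcomm : ∑ i, v i * x i = ∑ i, x i * v i :=
    Finset.sum_congr rfl (fun i _ => mul_comm _ _)
  ring

/-- The linear coupling functional. -/
def Scl (α : ℝ) (ε : R3 → Fin 2 → Fin 3 → ℂ) (θ : ℂ) (k : R3) (lam : Fin 2) : R3 →L[ℝ] ℂ :=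
  ∑ i : Fin 3, Gfun α ε θ 0 k lam i • (Complex.ofRealCLM.comp (EuclideanSpace.proj i))

lemma Scl_apply (α : ℝ) (ε : R3 → Fin 2 → Fin 3 → ℂ) (θ : ℂ) (k : R3) (lam : Fin 2)
    (y : R3) : Scl α ε θ k lam y = ∑ i : Fin 3, Gfun α ε θ 0 k lam i * ((y i : ℝ) : ℂ) := by
  simp [Scl]

lemma Scl_single (α : ℝ) (ε : R3 → Fin 2 → Fin 3 → ℂ) (θ : ℂ) (k : R3) (lam : Fin 2)
    (j : Fin 3) : Scl α ε θ k lam (EuclideanSpace.single j (1:ℝ)) = Gfun α ε θ 0 k lam j := by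
  rw [Scl_apply]
  rw [Finset.sum_eq_single j]
  · simp
  · intro i _ hij; simp [EuclideanSpace.single_apply, hij]
  · simp

lemma Qfun_eq (α : ℝ) (ε : R3 → Fin 2 → Fin 3 → ℂ) (η : ℝ → ℝ) (θ : ℂ)
    (x k : R3) (lam : Fin 2) :
    Qfun α ε η θ x k lam =
      ((η (‖x‖ * ‖k‖) : ℝ) : ℂ) * Complex.exp θ * Scl α ε θ k lam x := by
  rw [Qfun, Scl_apply, Finset.mul_sum]
  exact Finset.sum_congr rfl (fun i _ => by ring)

lemma fderiv_Qfun (α : ℝ) (ε : R3 → Fin 2 → Fin 3 → ℂ) (η : ℝ → ℝ) (hη : ContDiff ℝ (⊤ : ℕ∞) η)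
    (θ : ℂ) (x k : R3) (hx : x ≠ 0) (lam : Fin 2) (j : Fin 3) :
    fderiv ℝ (fun y : R3 => Qfun α ε η θ y k lam) x (EuclideanSpace.single j (1:ℝ)) =
      ((deriv η (‖x‖ * ‖k‖) * ‖k‖ * (x j) / ‖x‖ : ℝ) : ℂ) * Complex.exp θ
          * Scl α ε θ k lam x
        + ((η (‖x‖ * ‖k‖) : ℝ) : ℂ) * Complex.exp θ * Gfun α ε θ 0 k lam j := by
  have hdiffη : ∀ r : ℝ, HasDerivAt η (deriv η r) r :=
    fun r => ((hη.differentiable (by simp)) r).hasDerivAt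
  have h1 : HasFDerivAt (fun y : R3 => ‖y‖ * ‖k‖)
      (‖k‖ • (‖x‖⁻¹ • (innerSL ℝ x))) x := by
    simpa [smul_smul, mul_comm] using (hasFDerivAt_nrm hx).mul_const ‖k‖
  have h2 : HasFDerivAt (fun y : R3 => η (‖y‖ * ‖k‖))
      (deriv η (‖x‖ * ‖k‖) • (‖k‖ • (‖x‖⁻¹ • (innerSL ℝ x)))) x :=
    (hdiffη (‖x‖ * ‖k‖)).comp_hasFDerivAt x h1
  have h3 := (Complex.ofRealCLM.hasFDerivAt.comp x h2).mul_const (Complex.exp θ)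
  have hS : HasFDerivAt (fun y : R3 => Scl α ε θ k lam y) (Scl α ε θ k lam) x :=
    (Scl α ε θ k lam).hasFDerivAt
  have h4 := h3.mul hS
  simp only [Function.comp_def, Complex.ofRealCLM_apply] at h4
  have hfun : (fun y : R3 => Qfun α ε η θ y k lam)
      = fun y : R3 => ((η (‖y‖ * ‖k‖) : ℝ) : ℂ) * Complex.exp θ * Scl α ε θ k lam y := by
    funext y; exact Qfun_eq α ε η θ y k lam
  rw [hfun, (show HasFDerivAt (fun y : R3 => ((η (‖y‖ * ‖k‖) : ℝ) : ℂ) * Complex.exp θ * Scl α ε θ k lam y) _ x from h4).fderiv]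
  simp [Scl_single, EuclideanSpace.inner_single_right, real_inner_comm]
  push_cast
  ring

lemma fderiv_Qfun_zero (α : ℝ) (ε : R3 → Fin 2 → Fin 3 → ℂ) (η : ℝ → ℝ)
    (hη : Cutoff η) (θ : ℂ) (k : R3) (hk : k ≠ 0) (lam : Fin 2) (j : Fin 3) :
    fderiv ℝ (fun y : R3 => Qfun α ε η θ y k lam) 0 (EuclideanSpace.single j (1:ℝ)) =
      Complex.exp θ * Gfun α ε θ 0 k lam j := by
  have hkpos : 0 < ‖k‖ := norm_pos_iff.mpr hk
  have heq : (fun y : R3 => Qfun α ε η θ y k lam)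
      =ᶠ[nhds (0:R3)] fun y => Complex.exp θ • Scl α ε θ k lam y := by
    filter_upwards [Metric.ball_mem_nhds (0:R3) (by positivity : 0 < ‖k‖⁻¹)] with y hy
    rw [Qfun_eq]
    have h1 : η (‖y‖ * ‖k‖) = 1 := by
      apply hη.2.2.1
      have : ‖y‖ < ‖k‖⁻¹ := by simpa using hy
      calc ‖y‖ * ‖k‖ ≤ ‖k‖⁻¹ * ‖k‖ := by
            apply mul_le_mul_of_nonneg_right this.le (norm_nonneg k)
        _ = 1 := inv_mul_cancel₀ (ne_of_gt hkpos)
    rw [h1]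
    simp [smul_eq_mul]
  rw [heq.fderiv_eq]
  have : HasFDerivAt (fun y : R3 => Complex.exp θ • Scl α ε θ k lam y)
      (Complex.exp θ • Scl α ε θ k lam) 0 := (Complex.exp θ • Scl α ε θ k lam).hasFDerivAt
  rw [this.fderiv]
  simp [Scl_single, smul_eq_mul]

end Aux

section Bounds

def Afac (α : ℝ) (k : R3) : ℝ :=
  (α ^ ((3:ℝ)/2) / (2 * Real.pi) ^ ((3:ℝ)/2)) * Real.exp (1/30) * ((2 * ‖k‖) ^ (-(1:ℝ)/2))

lemma Afac_nonneg {α : ℝ} (hα : 0 ≤ α) (k : R3) : 0 ≤ Afac α k := by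
  unfold Afac
  have h1 : (0:ℝ) ≤ α ^ ((3:ℝ)/2) := Real.rpow_nonneg hα _
  have h2 : (0:ℝ) ≤ (2 * Real.pi) ^ ((3:ℝ)/2) := Real.rpow_nonneg (by positivity) _
  have h3 : (0:ℝ) ≤ (2 * ‖k‖) ^ (-(1:ℝ)/2) := Real.rpow_nonneg (by positivity) _
  positivity

lemma abs_exp_neg_theta_le {θ : ℂ} (hθ : ‖θ‖ ≤ 1/30) :
    ‖Complex.exp (-θ)‖ ≤ Real.exp (1/30) := by
  rw [Complex.norm_exp]
  apply Real.exp_le_exp.mpr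
  simp only [Complex.neg_re]
  linarith [Complex.abs_re_le_norm θ, neg_abs_le θ.re, neg_le_abs θ.re]

lemma re_exp_neg_two_theta_nonneg {θ : ℂ} (hθ : ‖θ‖ ≤ 1/30) :
    0 ≤ (Complex.exp (-(2*θ))).re := by
  rw [Complex.exp_re]
  apply mul_nonneg (Real.exp_nonneg _)
  apply Real.cos_nonneg_of_mem_Icc
  have him : |(-(2*θ)).im| ≤ 1/15 := by
    calc |(-(2*θ)).im| ≤ ‖-(2*θ)‖ := Complex.abs_im_le_norm _
      _ = 2 * ‖θ‖ := by rw [norm_neg, norm_mul]; simp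
      _ ≤ 1/15 := by linarith
  have hpi : (1:ℝ) ≤ Real.pi / 2 := by linarith [Real.pi_gt_d6]
  constructor
  · linarith [neg_abs_le ((-(2*θ)).im)]
  · linarith [le_abs_self ((-(2*θ)).im)]

lemma abs_exp_gauss_le {θ : ℂ} (hθ : ‖θ‖ ≤ 1/30) (r : ℝ) (hr : 0 ≤ r) :
    ‖Complex.exp (-(Complex.exp (-(2*θ))) * (r : ℂ))‖ ≤ 1 := by
  rw [Complex.norm_exp, show (1:ℝ) = Real.exp 0 by simp]
  apply Real.exp_le_exp.mpr
  have h : (-(Complex.exp (-(2*θ))) * (r : ℂ)).re = -(Complex.exp (-(2*θ))).re * r := by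
    simp [Complex.mul_re]
  rw [h]
  have := re_exp_neg_two_theta_nonneg hθ
  nlinarith

lemma abs_exp_phase (α r : ℝ) :
    ‖Complex.exp (-Complex.I * (α : ℂ) * (r : ℂ))‖ = 1 := by
  rw [Complex.norm_exp]
  have : (-Complex.I * (α : ℂ) * (r : ℂ)).re = 0 := by
    simp [Complex.mul_re, Complex.mul_im]
  rw [this, Real.exp_zero]

lemma abs_pre_le {α : ℝ} (hα : 0 ≤ α) {θ : ℂ} (hθ : ‖θ‖ ≤ 1/30) (k : R3) :
    ‖((α ^ ((3:ℝ)/2) / (2 * Real.pi) ^ ((3:ℝ)/2) : ℝ) : ℂ) * Complex.exp (-θ) *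
      Complex.exp (-(Complex.exp (-(2*θ))) * ((‖k‖ ^ 2 : ℝ) : ℂ)) *
      (((2 * ‖k‖) ^ (-(1:ℝ)/2) : ℝ) : ℂ)‖ ≤ Afac α k := by
  simp only [norm_mul]
  have hc : (0:ℝ) ≤ α ^ ((3:ℝ)/2) / (2 * Real.pi) ^ ((3:ℝ)/2) := by
    have h1 : (0:ℝ) ≤ α ^ ((3:ℝ)/2) := Real.rpow_nonneg hα _
    have h2 : (0:ℝ) ≤ (2 * Real.pi) ^ ((3:ℝ)/2) := Real.rpow_nonneg (by positivity) _
    positivity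
  have hR : (0:ℝ) ≤ (2 * ‖k‖) ^ (-(1:ℝ)/2) := Real.rpow_nonneg (by positivity) _
  have h0 : ‖((α ^ ((3:ℝ)/2) / (2 * Real.pi) ^ ((3:ℝ)/2) : ℝ) : ℂ)‖
      = α ^ ((3:ℝ)/2) / (2 * Real.pi) ^ ((3:ℝ)/2) := by
    rw [Complex.norm_real, Real.norm_eq_abs, abs_of_nonneg hc]
  have h3 : ‖(((2 * ‖k‖) ^ (-(1:ℝ)/2) : ℝ) : ℂ)‖ = (2 * ‖k‖) ^ (-(1:ℝ)/2) := by
    rw [Complex.norm_real, Real.norm_eq_abs, abs_of_nonneg hR]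
  rw [h0, h3]
  have e1 := abs_exp_neg_theta_le hθ
  have e2 := abs_exp_gauss_le hθ (‖k‖^2) (by positivity)
  have ha1 : (0:ℝ) ≤ ‖Complex.exp (-θ)‖ := norm_nonneg _
  have ha2 : (0:ℝ) ≤
      ‖Complex.exp (-(Complex.exp (-(2*θ))) * ((‖k‖^2 : ℝ) : ℂ))‖ :=
    norm_nonneg _
  unfold Afac
  calc α ^ ((3:ℝ)/2) / (2 * Real.pi) ^ ((3:ℝ)/2) * ‖Complex.exp (-θ)‖ *
        ‖Complex.exp (-(Complex.exp (-(2*θ))) * ((‖k‖^2 : ℝ) : ℂ))‖ *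
        ((2 * ‖k‖) ^ (-(1:ℝ)/2))
      = (α ^ ((3:ℝ)/2) / (2 * Real.pi) ^ ((3:ℝ)/2) * ((2 * ‖k‖) ^ (-(1:ℝ)/2))) *
        (‖Complex.exp (-θ)‖ *
          ‖Complex.exp (-(Complex.exp (-(2*θ))) * ((‖k‖^2 : ℝ) : ℂ))‖) := by ring
    _ ≤ (α ^ ((3:ℝ)/2) / (2 * Real.pi) ^ ((3:ℝ)/2) * ((2 * ‖k‖) ^ (-(1:ℝ)/2))) *
        (Real.exp (1/30) * 1) := by
          apply mul_le_mul_of_nonneg_left _ (by positivity)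
          exact mul_le_mul e1 e2 ha2 (Real.exp_nonneg _)
    _ = α ^ ((3:ℝ)/2) / (2 * Real.pi) ^ ((3:ℝ)/2) * Real.exp (1/30) *
        ((2 * ‖k‖) ^ (-(1:ℝ)/2)) := by ring

lemma abs_Gfun_le {α : ℝ} (hα : 0 ≤ α) {ε : R3 → Fin 2 → Fin 3 → ℂ} {θ : ℂ}
    (hθ : ‖θ‖ ≤ 1/30) (x k : R3) (lam : Fin 2) (j : Fin 3) :
    ‖Gfun α ε θ x k lam j‖ ≤ Afac α k * ‖ε k lam j‖ := by
  unfold Gfun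
  rw [norm_mul, norm_mul]
  rw [abs_exp_phase]
  rw [mul_one]
  exact mul_le_mul_of_nonneg_right (abs_pre_le hα hθ k) (norm_nonneg _)

lemma abs_Gfun_sub_le {α : ℝ} (hα : 0 ≤ α) {ε : R3 → Fin 2 → Fin 3 → ℂ} {θ : ℂ}
    (hθ : ‖θ‖ ≤ 1/30) (x k : R3) (lam : Fin 2) (j : Fin 3)
    (hsmall : α * (‖k‖ * ‖x‖) ≤ 1) :
    ‖Gfun α ε θ x k lam j - Gfun α ε θ 0 k lam j‖ ≤
      Afac α k * (2 * α * (‖k‖ * ‖x‖)) * ‖ε k lam j‖ := by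
  have hrw : Gfun α ε θ x k lam j - Gfun α ε θ 0 k lam j =
      (((α ^ ((3:ℝ)/2) / (2 * Real.pi) ^ ((3:ℝ)/2) : ℝ) : ℂ) * Complex.exp (-θ) *
        Complex.exp (-(Complex.exp (-(2*θ))) * ((‖k‖ ^ 2 : ℝ) : ℂ)) *
        (((2 * ‖k‖) ^ (-(1:ℝ)/2) : ℝ) : ℂ)) * ε k lam j *
        (Complex.exp (-Complex.I * (α : ℂ) * ((inner ℝ k x : ℝ) : ℂ)) - 1) := by
    unfold Gfun
    have h0 : ((inner ℝ k (0:R3) : ℝ) : ℂ) = 0 := by simp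
    rw [h0, mul_zero, Complex.exp_zero]
    ring
  rw [hrw, norm_mul, norm_mul]
  have hb2 : ‖Complex.exp (-Complex.I * (α : ℂ) * ((inner ℝ k x : ℝ) : ℂ)) - 1‖ ≤
      2 * (α * (‖k‖ * ‖x‖)) := by
    have habs : ‖-Complex.I * (α : ℂ) * ((inner ℝ k x : ℝ) : ℂ)‖ =
        α * |(inner ℝ k x : ℝ)| := by
      simp only [norm_mul, norm_neg, Complex.norm_I, Complex.norm_real, Real.norm_eq_abs, one_mul]
      rw [abs_of_nonneg hα]
    have hinner : |(inner ℝ k x : ℝ)| ≤ ‖k‖ * ‖x‖ := abs_real_inner_le_norm k x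
    have hle1 : ‖-Complex.I * (α : ℂ) * ((inner ℝ k x : ℝ) : ℂ)‖ ≤ 1 := by
      rw [habs]
      nlinarith [abs_nonneg (inner ℝ k x : ℝ), norm_nonneg k, norm_nonneg x]
    calc ‖Complex.exp (-Complex.I * (α : ℂ) * ((inner ℝ k x : ℝ) : ℂ)) - 1‖ ≤
          2 * ‖-Complex.I * (α : ℂ) * ((inner ℝ k x : ℝ) : ℂ)‖ :=
            Complex.norm_exp_sub_one_le hle1
      _ ≤ 2 * (α * (‖k‖ * ‖x‖)) := by
          rw [habs]
          nlinarith [abs_nonneg (inner ℝ k x : ℝ)]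
  calc ‖_‖ * ‖ε k lam j‖ * ‖_‖ ≤
        (Afac α k * ‖ε k lam j‖) * (2 * (α * (‖k‖ * ‖x‖))) := by
          apply mul_le_mul
          · exact mul_le_mul_of_nonneg_right (abs_pre_le hα hθ k) (norm_nonneg _)
          · exact hb2
          · exact norm_nonneg _
          · exact mul_nonneg (Afac_nonneg hα k) (norm_nonneg _)
    _ = Afac α k * (2 * α * (‖k‖ * ‖x‖)) * ‖ε k lam j‖ := by ring

variable {η : ℝ → ℝ}

lemma eta_nonneg (hη : Cutoff η) {r : ℝ} (hr : 0 ≤ r) : 0 ≤ η r := by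
  rcases le_or_gt 2 r with h | h
  · rw [hη.2.2.2 r h]
  · have h2 : η 2 = 0 := hη.2.2.2 2 le_rfl
    have := hη.2.1 (Set.mem_Ici.mpr hr) (Set.mem_Ici.mpr (by norm_num : (0:ℝ) ≤ 2)) h.le
    linarith

lemma eta_le_one (hη : Cutoff η) {r : ℝ} (hr : 0 ≤ r) : η r ≤ 1 := by
  rcases le_or_gt r 1 with h | h
  · rw [hη.2.2.1 r h]
  · have := hη.2.1 (Set.mem_Ici.mpr (by norm_num : (0:ℝ) ≤ 1)) (Set.mem_Ici.mpr hr) h.le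
    have h1 : η 1 = 1 := hη.2.2.1 1 le_rfl
    linarith

lemma deriv_eta_zero_lt (hη : Cutoff η) {r : ℝ} (hr : r < 1) : deriv η r = 0 := by
  have heq : η =ᶠ[nhds r] fun _ => (1:ℝ) := by
    filter_upwards [Iio_mem_nhds hr] with y hy
    exact hη.2.2.1 y (le_of_lt hy)
  rw [heq.deriv_eq]
  exact deriv_const r 1

lemma deriv_eta_zero_gt (hη : Cutoff η) {r : ℝ} (hr : 2 < r) : deriv η r = 0 := by
  have heq : η =ᶠ[nhds r] fun _ => (0:ℝ) := by
    filter_upwards [Ioi_mem_nhds hr] with y hy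
    exact hη.2.2.2 y (le_of_lt hy)
  rw [heq.deriv_eq]
  exact deriv_const r 0

lemma bddAbove_abs_deriv (hη : Cutoff η) :
    BddAbove (Set.range fun r : ℝ => |deriv η r|) := by
  have hcont : Continuous (deriv η) := hη.1.continuous_deriv (by simp)
  have hcomp : IsCompact ((fun r => |deriv η r|) '' Set.Icc (1:ℝ) 2) :=
    (isCompact_Icc).image (hcont.abs)
  obtain ⟨M, hM⟩ := hcomp.bddAbove
  refine ⟨max M 0, ?_⟩
  rintro y ⟨r, rfl⟩
  rcases lt_or_ge r 1 with h | h
  · simp [deriv_eta_zero_lt hη h]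
  rcases le_or_gt r 2 with h2 | h2
  · exact le_max_of_le_left (hM (Set.mem_image_of_mem _ ⟨h, h2⟩))
  · simp [deriv_eta_zero_gt hη h2]

lemma abs_deriv_le (hη : Cutoff η) (r : ℝ) : |deriv η r| ≤ supD η :=
  le_ciSup (bddAbove_abs_deriv hη) r

lemma supD_nonneg (hη : Cutoff η) : 0 ≤ supD η :=
  le_trans (abs_nonneg _) (abs_deriv_le hη 0)

lemma supD2_nonneg : 0 ≤ supD2 η :=
  Real.iSup_nonneg (fun r => abs_nonneg _)

lemma sum_abs_le_sqrt3 (x : R3) : ∑ i, |x i| ≤ Real.sqrt 3 * ‖x‖ := by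
  have hnorm : ‖x‖ = Real.sqrt (∑ i, x i ^ 2) := by
    rw [EuclideanSpace.norm_eq]
    congr 1
    exact Finset.sum_congr rfl (fun i _ => by rw [Real.norm_eq_abs, sq_abs])
  rw [hnorm, ← Real.sqrt_mul (by norm_num : (0:ℝ) ≤ 3)]
  apply Real.le_sqrt_of_sq_le
  rw [Fin.sum_univ_three, Fin.sum_univ_three]
  nlinarith [sq_nonneg (|x 0| - |x 1|), sq_nonneg (|x 0| - |x 2|), sq_nonneg (|x 1| - |x 2|),
    sq_abs (x 0), sq_abs (x 1), sq_abs (x 2), abs_nonneg (x 0), abs_nonneg (x 1), abs_nonneg (x 2)]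

end Bounds

section Pointwise

variable {α : ℝ} {ε : R3 → Fin 2 → Fin 3 → ℂ} {η : ℝ → ℝ} {θ : ℂ}

lemma abs_coord_le (x : R3) (j : Fin 3) : |x j| ≤ ‖x‖ := by
  rw [EuclideanSpace.norm_eq]
  apply Real.le_sqrt_of_sq_le
  rw [sq_abs]
  apply Finset.single_le_sum (f := fun i => ‖x i‖ ^ 2) (fun i _ => by positivity)
    (Finset.mem_univ j) |>.trans_eq' ?_
  rw [Real.norm_eq_abs, sq_abs]

lemma abs_Scl_le (hα : 0 ≤ α) (hθ : ‖θ‖ ≤ 1/30) (k : R3) (lam : Fin 2)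
    (hεbd : ∀ i, ‖ε k lam i‖ ≤ 1) (x : R3) :
    ‖Scl α ε θ k lam x‖ ≤ Afac α k * (Real.sqrt 3 * ‖x‖) := by
  rw [Scl_apply]
  calc ‖∑ i : Fin 3, Gfun α ε θ 0 k lam i * ((x i : ℝ) : ℂ)‖
      ≤ ∑ i : Fin 3, ‖Gfun α ε θ 0 k lam i * ((x i : ℝ) : ℂ)‖ :=
        norm_sum_le _ _
    _ ≤ ∑ i : Fin 3, Afac α k * |x i| := by
        apply Finset.sum_le_sum
        intro i _
        rw [norm_mul, Complex.norm_real, Real.norm_eq_abs]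
        apply mul_le_mul_of_nonneg_right _ (abs_nonneg _)
        calc ‖Gfun α ε θ 0 k lam i‖ ≤ Afac α k * ‖ε k lam i‖ :=
              abs_Gfun_le hα hθ 0 k lam i
          _ ≤ Afac α k * 1 := mul_le_mul_of_nonneg_left (hεbd i) (Afac_nonneg hα k)
          _ = Afac α k := mul_one _
    _ = Afac α k * ∑ i, |x i| := by rw [Finset.mul_sum]
    _ ≤ Afac α k * (Real.sqrt 3 * ‖x‖) :=
        mul_le_mul_of_nonneg_left (sum_abs_le_sqrt3 x) (Afac_nonneg hα k)

lemma abs_GPF_le (hα0 : 0 < α) (hα1 : α ≤ 1) (hη : Cutoff η)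
    (hθ : ‖θ‖ ≤ 1/30) (x k : R3) (hk : k ≠ 0) (lam : Fin 2) (j : Fin 3)
    (hεbd : ∀ i, ‖ε k lam i‖ ≤ 1) :
    ‖GPF α ε η θ x k lam j‖ ≤
      (2 + 2 * Real.sqrt 3 * supD η) * Afac α k *
        (‖k‖ * Real.sqrt (1 + ‖x‖ ^ 2)) := by
  set K := 2 + 2 * Real.sqrt 3 * supD η with hK
  set A := Afac α k with hA
  set S := Real.sqrt (1 + ‖x‖ ^ 2) with hS
  have hA0 : 0 ≤ A := Afac_nonneg hα0.le k
  have hsupD := supD_nonneg hη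
  have hsqrt3 : 0 ≤ Real.sqrt 3 := Real.sqrt_nonneg 3
  have hK2 : 2 ≤ K := by nlinarith
  have hS1 : 1 ≤ S := Real.le_sqrt_of_sq_le (by nlinarith [sq_nonneg ‖x‖])
  have hSx : ‖x‖ ≤ S := Real.le_sqrt_of_sq_le (by nlinarith)
  have hk0 : 0 < ‖k‖ := norm_pos_iff.mpr hk
  rcases eq_or_ne x 0 with rfl | hx
  · rw [GPF, fderiv_Qfun_zero α ε η hη θ k hk lam j]
    rw [← mul_assoc, ← Complex.exp_add, neg_add_cancel, Complex.exp_zero, one_mul,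
      sub_self, norm_zero]
    have h0 : (0:ℝ) ≤ ‖k‖ * S := by positivity
    have hK0 : (0:ℝ) ≤ K := by linarith
    exact mul_nonneg (mul_nonneg hK0 hA0) h0
  · rw [GPF, fderiv_Qfun α ε η hη.1 θ x k hx lam j]
    have hx0 : 0 < ‖x‖ := norm_pos_iff.mpr hx
    set r := ‖x‖ * ‖k‖ with hr
    have hr0 : 0 < r := by positivity
    have hrS : r ≤ ‖k‖ * S := by
      rw [hr, mul_comm]
      exact mul_le_mul_of_nonneg_left hSx hk0.le
    have hexp : Complex.exp (-θ) *
        (((deriv η r * ‖k‖ * (x j) / ‖x‖ : ℝ) : ℂ) * Complex.exp θ * Scl α ε θ k lam x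
          + ((η r : ℝ) : ℂ) * Complex.exp θ * Gfun α ε θ 0 k lam j)
        = ((deriv η r * ‖k‖ * (x j) / ‖x‖ : ℝ) : ℂ) * Scl α ε θ k lam x
          + ((η r : ℝ) : ℂ) * Gfun α ε θ 0 k lam j := by
      have h1 : Complex.exp (-θ) * Complex.exp θ = 1 := by
        rw [← Complex.exp_add, neg_add_cancel, Complex.exp_zero]
      calc Complex.exp (-θ) * _ = (Complex.exp (-θ) * Complex.exp θ) *
            (((deriv η r * ‖k‖ * (x j) / ‖x‖ : ℝ) : ℂ) * Scl α ε θ k lam x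
              + ((η r : ℝ) : ℂ) * Gfun α ε θ 0 k lam j) := by ring
        _ = _ := by rw [h1, one_mul]
    rw [hexp]
    rcases lt_or_ge r 1 with hcase | hcase
    · -- infrared regime : η ≡ 1, η' = 0
      rw [deriv_eta_zero_lt hη hcase, hη.2.2.1 r hcase.le]
      simp only [zero_mul, Complex.ofReal_zero, Complex.ofReal_one, one_mul]
      rw [zero_div, Complex.ofReal_zero, zero_mul, zero_add]
      have hsmall : α * (‖k‖ * ‖x‖) ≤ 1 := by nlinarith [mul_pos hk0 hx0]
      calc ‖Gfun α ε θ x k lam j - Gfun α ε θ 0 k lam j‖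
          ≤ A * (2 * α * (‖k‖ * ‖x‖)) * ‖ε k lam j‖ :=
            abs_Gfun_sub_le hα0.le hθ x k lam j hsmall
        _ ≤ A * (2 * α * (‖k‖ * ‖x‖)) * 1 := by
            apply mul_le_mul_of_nonneg_left (hεbd j)
            positivity
        _ ≤ K * A * (‖k‖ * S) := by
            have h1 : A * ‖k‖ * ‖x‖ ≤ A * ‖k‖ * S :=
              mul_le_mul_of_nonneg_left hSx (mul_nonneg hA0 hk0.le)
            have h2 : (0:ℝ) ≤ A * ‖k‖ * S := by positivity
            have h3 : (0:ℝ) ≤ A * ‖k‖ * ‖x‖ := by positivity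
            nlinarith
    · -- the regime `1 ≤ ‖x‖ ‖k‖`
      set d := deriv η r * ‖k‖ * x j / ‖x‖ with hd
      set B := ((d : ℝ) : ℂ) * Scl α ε θ k lam x with hB
      set C := ((η r : ℝ) : ℂ) * Gfun α ε θ 0 k lam j with hC
      have ha : ‖Gfun α ε θ x k lam j‖ ≤ A := by
        calc ‖Gfun α ε θ x k lam j‖ ≤ A * ‖ε k lam j‖ :=
              abs_Gfun_le hα0.le hθ x k lam j
          _ ≤ A * 1 := mul_le_mul_of_nonneg_left (hεbd j) hA0
          _ = A := mul_one _
      have hc : ‖C‖ ≤ A := by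
        rw [hC, norm_mul, Complex.norm_real, Real.norm_eq_abs]
        have hη01 : |η r| ≤ 1 := by
          rw [abs_of_nonneg (eta_nonneg hη hr0.le)]
          exact eta_le_one hη hr0.le
        calc |η r| * ‖Gfun α ε θ 0 k lam j‖
            ≤ 1 * (A * 1) := by
              apply mul_le_mul hη01 _ (norm_nonneg _) zero_le_one
              calc ‖Gfun α ε θ 0 k lam j‖ ≤ A * ‖ε k lam j‖ :=
                    abs_Gfun_le hα0.le hθ 0 k lam j
                _ ≤ A * 1 := mul_le_mul_of_nonneg_left (hεbd j) hA0
          _ = A := by ring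
      have hb : ‖B‖ ≤ 2 * Real.sqrt 3 * supD η * A := by
        rcases le_or_gt r 2 with h2 | h2
        · rw [hB, norm_mul, Complex.norm_real, Real.norm_eq_abs]
          have hdle : |d| ≤ supD η * ‖k‖ := by
            rw [hd, abs_div, abs_of_pos hx0, abs_mul, abs_mul, abs_of_nonneg hk0.le]
            rw [div_le_iff₀ hx0]
            calc |deriv η r| * ‖k‖ * |x j| ≤ supD η * ‖k‖ * ‖x‖ := by
                  apply mul_le_mul _ (abs_coord_le x j) (abs_nonneg _)
                    (mul_nonneg hsupD hk0.le)
                  exact mul_le_mul_of_nonneg_right (abs_deriv_le hη r) hk0.le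
              _ = supD η * ‖k‖ * ‖x‖ := rfl
          calc |d| * ‖Scl α ε θ k lam x‖
              ≤ (supD η * ‖k‖) * (A * (Real.sqrt 3 * ‖x‖)) := by
                apply mul_le_mul hdle (abs_Scl_le hα0.le hθ k lam hεbd x)
                  (norm_nonneg _) (mul_nonneg hsupD hk0.le)
            _ = Real.sqrt 3 * supD η * A * r := by rw [hr]; ring
            _ ≤ 2 * Real.sqrt 3 * supD η * A := by
                nlinarith [mul_nonneg (mul_nonneg hsqrt3 hsupD) hA0]
        · rw [hB, hd, deriv_eta_zero_gt hη h2]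
          simp only [zero_mul, zero_div, Complex.ofReal_zero, norm_mul, norm_zero]
          positivity
      calc ‖Gfun α ε θ x k lam j - (B + C)‖
          = ‖Gfun α ε θ x k lam j - (B + C)‖ := rfl
        _ ≤ ‖Gfun α ε θ x k lam j‖ + ‖B + C‖ := norm_sub_le _ _
        _ ≤ ‖Gfun α ε θ x k lam j‖ + (‖B‖ + ‖C‖) := by linarith [norm_add_le B C]
        _ = ‖Gfun α ε θ x k lam j‖ + (‖B‖ + ‖C‖) := rfl
        _ ≤ A + (2 * Real.sqrt 3 * supD η * A + A) := by linarith
        _ = K * A := by rw [hK]; ring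
        _ ≤ K * A * (‖k‖ * S) := by
            have h1 : 1 ≤ ‖k‖ * S := le_trans hcase hrS
            have hKA : 0 ≤ K * A := mul_nonneg (by linarith) hA0
            nlinarith

end Pointwise

section VolNum

lemma gamma_five_half : Real.Gamma ((3:ℝ)/2 + 1) = 3/4 * Real.sqrt Real.pi := by
  rw [Real.Gamma_add_one (by norm_num)]
  have h32 : (3:ℝ)/2 = 1/2 + 1 := by norm_num
  rw [h32, Real.Gamma_add_one (by norm_num), Real.Gamma_one_half_eq]
  ring

lemma vol_closedBall_R3 {s : ℝ} (hs : 0 ≤ s) :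
    (volume (Metric.closedBall (0:R3) s)).toReal = 4/3 * Real.pi * s^3 := by
  rw [EuclideanSpace.volume_closedBall]
  have hcard : Fintype.card (Fin 3) = 3 := by simp
  rw [hcard]
  have hg : ((3:ℕ):ℝ)/2 + 1 = (3:ℝ)/2 + 1 := by norm_num
  rw [hg, gamma_five_half]
  have hπ : 0 < Real.sqrt Real.pi := Real.sqrt_pos.mpr Real.pi_pos
  have hc : (0:ℝ) ≤ Real.sqrt Real.pi ^ 3 / (3/4 * Real.sqrt Real.pi) := by positivity
  rw [ENNReal.toReal_mul, ENNReal.toReal_pow, ENNReal.toReal_ofReal hs,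
    ENNReal.toReal_ofReal hc]
  have hsq : Real.sqrt Real.pi ^ 2 = Real.pi := Real.sq_sqrt Real.pi_pos.le
  have : Real.sqrt Real.pi ^ 3 = Real.pi * Real.sqrt Real.pi := by
    rw [pow_succ, hsq]
  rw [this]
  field_simp

lemma coeff_ineq (η : ℝ → ℝ) (hη : Cutoff η) :
    (2 + 2 * Real.sqrt 3 * supD η)^2 * Real.exp (1/15) ≤
      18 * Real.pi^2 * CA^2 * (4 + 4 * supD η + 2 * supD2 η)^2 := by
  set h := supD η with hh
  set h2 := supD2 η with hh2
  set P := 4 + 4*h + 2*h2 with hP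
  have hh0 : 0 ≤ h := supD_nonneg hη
  have hh20 : 0 ≤ h2 := supD2_nonneg
  have hs3 : Real.sqrt 3 ^ 2 = 3 := Real.sq_sqrt (by norm_num)
  have hs30 : 0 ≤ Real.sqrt 3 := Real.sqrt_nonneg 3
  have hs31 : 1 ≤ Real.sqrt 3 := by nlinarith
  have hKP : 2 + 2*Real.sqrt 3*h ≤ Real.sqrt 3 * P := by
    rw [hP]; nlinarith
  have hK0 : (0:ℝ) ≤ 2 + 2*Real.sqrt 3*h := by positivity
  have hK2 : (2 + 2*Real.sqrt 3*h)^2 ≤ 3 * P^2 := by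
    calc (2 + 2*Real.sqrt 3*h)^2 ≤ (Real.sqrt 3 * P)^2 := by
          apply pow_le_pow_left₀ hK0 hKP
      _ = 3 * P^2 := by rw [mul_pow, hs3]
  -- CA bound
  have hCA8 : Real.exp (5/2) ≤ 8 * Real.pi^2 * CA^2 := by
    have hM : C1 ≤ max (max C1 C1om) C2 := le_trans (le_max_left _ _) (le_max_left _ _)
    have hC10 : 0 ≤ C1 := by
      unfold C1; positivity
    have hM2 : C1^2 ≤ (max (max C1 C1om) C2)^2 := pow_le_pow_left₀ hC10 hM 2
    have hCA2 : CA^2 = (Real.exp 1 / 2) * (max (max C1 C1om) C2)^2 := by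
      unfold CA
      rw [mul_pow, Real.sq_sqrt (by positivity : (0:ℝ) ≤ Real.exp 1 / 2)]
    have hC12 : C1^2 = Real.exp (3/2) / (4 * Real.pi^2) := by
      unfold C1
      rw [div_pow, sq, ← Real.exp_add]
      norm_num
      ring
    have hexp : Real.exp 1 / 2 * (Real.exp (3/2) / (4 * Real.pi^2)) =
        Real.exp (5/2) / (8 * Real.pi^2) := by
      rw [div_mul_div_comm, ← Real.exp_add]
      norm_num
      ring_nf
    have hle : Real.exp (5/2) / (8 * Real.pi^2) ≤ CA^2 := by
      rw [hCA2, ← hexp]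
      apply mul_le_mul_of_nonneg_left _ (by positivity)
      rw [← hC12]; exact hM2
    have hpi2 : (0:ℝ) < 8 * Real.pi^2 := by positivity
    calc Real.exp (5/2) = (Real.exp (5/2) / (8 * Real.pi^2)) * (8 * Real.pi^2) := by
          field_simp
      _ ≤ CA^2 * (8 * Real.pi^2) := mul_le_mul_of_nonneg_right hle hpi2.le
      _ = 8 * Real.pi^2 * CA^2 := by ring
  have hE1 : Real.exp (1/15 : ℝ) ≤ 3 := by
    calc Real.exp (1/15 : ℝ) ≤ Real.exp 1 := Real.exp_le_exp.mpr (by norm_num)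
      _ ≤ 2.7182818286 := Real.exp_one_lt_d9.le
      _ ≤ 3 := by norm_num
  have hE1pos : 0 < Real.exp (1/15 : ℝ) := Real.exp_pos _
  have hE2 : (7:ℝ) ≤ Real.exp (5/2) := by
    have h1 : Real.exp 2 ≤ Real.exp (5/2) := Real.exp_le_exp.mpr (by norm_num)
    have h2 : Real.exp 2 = Real.exp 1 * Real.exp 1 := by
      rw [← Real.exp_add]; norm_num
    nlinarith [Real.exp_one_gt_d9]
  have h1 : (2 + 2*Real.sqrt 3*h)^2 * Real.exp (1/15 : ℝ) ≤ (3 * P^2) * 3 :=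
    mul_le_mul hK2 hE1 hE1pos.le (by positivity)
  have h2' : 7 * P^2 ≤ (8 * Real.pi^2 * CA^2) * P^2 :=
    mul_le_mul_of_nonneg_right (le_trans hE2 hCA8) (sq_nonneg P)
  nlinarith [sq_nonneg P]

end VolNum

/-- Remark A.3, first estimate. -/
theorem remarkA3_first
    (α : ℝ) (hα0 : 0 < α) (hα1 : α ≤ 1)
    (ε : R3 → Fin 2 → Fin 3 → ℂ) (hε : Polarization ε)
    (η : ℝ → ℝ) (hη : Cutoff η)
    (m : ℤ) (hm : m ∈ ({-1, 0, 1, 2} : Set ℤ))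
    (s t : ℝ) (ht : 0 < t) (hts : t < s)
    (θ : ℂ) (hθ : ‖θ‖ ≤ 1/30)
    (x : R3) (j : Fin 3) :
    (∑ lam : Fin 2, ∫ k in {k : R3 | t ≤ ‖k‖ ∧ ‖k‖ ≤ s},
        ‖k‖ ^ m * ‖GPF α ε η θ x k lam j‖ ^ 2 * (1 + ‖x‖ ^ 2)⁻¹)
      ≤ α ^ 3 * C' η ^ 2 * s ^ (m + 4) := by
  obtain ⟨hεmeas, hεae⟩ := hε
  have hs0 : 0 < s := lt_trans ht hts
  obtain ⟨n, hn⟩ : ∃ n : ℕ, m = (n:ℤ) - 1 := by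
    simp only [Set.mem_insert_iff, Set.mem_singleton_iff] at hm
    rcases hm with rfl | rfl | rfl | rfl
    exacts [⟨0, by norm_num⟩, ⟨1, by norm_num⟩, ⟨2, by norm_num⟩, ⟨3, by norm_num⟩]
  set Ann : Set R3 := {k : R3 | t ≤ ‖k‖ ∧ ‖k‖ ≤ s} with hAnn
  have hmeasAnn : MeasurableSet Ann := by
    have h : Ann = (fun k : R3 => ‖k‖) ⁻¹' (Set.Icc t s) := by
      ext k; simp [Set.mem_Icc, hAnn]
    rw [h]
    exact measurable_norm measurableSet_Icc
  have hsub : Ann ⊆ Metric.closedBall 0 s := fun k hk =>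
    mem_closedBall_zero_iff.mpr hk.2
  set K := 2 + 2 * Real.sqrt 3 * supD η with hK
  set D := α ^ ((3:ℝ)/2) / (2 * Real.pi) ^ ((3:ℝ)/2) * Real.exp (1/30) with hD
  have hD0 : 0 ≤ D := by
    have h1 : (0:ℝ) ≤ α ^ ((3:ℝ)/2) := Real.rpow_nonneg hα0.le _
    have h2 : (0:ℝ) ≤ (2*Real.pi) ^ ((3:ℝ)/2) := Real.rpow_nonneg (by positivity) _
    rw [hD]; positivity
  have hK0 : 0 ≤ K := by
    rw [hK]
    have := supD_nonneg hη
    have := Real.sqrt_nonneg 3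
    positivity
  set c := K^2 * D^2 / 2 * s^n with hc
  have hc0 : 0 ≤ c := by rw [hc]; positivity
  have hVfin : volume Ann ≠ ⊤ :=
    (lt_of_le_of_lt (measure_mono hsub) measure_closedBall_lt_top).ne
  have hV : (volume Ann).toReal ≤ 4/3 * Real.pi * s^3 := by
    rw [← vol_closedBall_R3 hs0.le]
    exact ENNReal.toReal_mono measure_closedBall_lt_top.ne (measure_mono hsub)
  have hlam : ∀ lam : Fin 2,
      (∫ k in Ann, ‖k‖ ^ m * ‖GPF α ε η θ x k lam j‖ ^ 2 * (1 + ‖x‖ ^ 2)⁻¹)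
        ≤ c * (4/3 * Real.pi * s^3) := by
    intro lam
    have hbound : ∀ᵐ k ∂(volume.restrict Ann),
        ‖k‖ ^ m * ‖GPF α ε η θ x k lam j‖ ^ 2 * (1 + ‖x‖ ^ 2)⁻¹ ≤ c := by
      filter_upwards [ae_restrict_of_ae hεae, ae_restrict_mem hmeasAnn] with k hk1 hk2
      have hkt : t ≤ ‖k‖ := hk2.1
      have hks : ‖k‖ ≤ s := hk2.2
      have hk0 : 0 < ‖k‖ := lt_of_lt_of_le ht hkt
      have hkne : k ≠ 0 := by
        intro h; rw [h, norm_zero] at hk0; exact lt_irrefl 0 hk0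
      have hεbd : ∀ i, ‖ε k lam i‖ ≤ 1 := by
        intro i
        have hsum := (hk1 hkne lam lam).1
        rw [if_pos rfl] at hsum
        have h2 : ((∑ i2 : Fin 3, Complex.normSq (ε k lam i2) : ℝ) : ℂ) = 1 := by
          push_cast
          rw [← hsum]
          exact Finset.sum_congr rfl fun i2 _ => by
            rw [mul_comm, Complex.mul_conj]
        have hre : ∑ i2 : Fin 3, Complex.normSq (ε k lam i2) = 1 := by
          exact_mod_cast h2
        have hle : Complex.normSq (ε k lam i) ≤ 1 := by
          rw [← hre]
          exact Finset.single_le_sum (f := fun i2 => Complex.normSq (ε k lam i2))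
            (fun i2 _ => Complex.normSq_nonneg _) (Finset.mem_univ i)
        have hsq := Complex.sq_norm (ε k lam i)
        nlinarith [norm_nonneg (ε k lam i)]
      have hb := abs_GPF_le hα0 hα1 hη hθ x k hkne lam j hεbd
      have hp : (0:ℝ) < 1 + ‖x‖^2 := by positivity
      have habs2 : ‖GPF α ε η θ x k lam j‖^2 * (1 + ‖x‖^2)⁻¹
          ≤ (K * Afac α k * ‖k‖)^2 := by
        have h1 : ‖GPF α ε η θ x k lam j‖^2 ≤
            (K * Afac α k * (‖k‖ * Real.sqrt (1+‖x‖^2)))^2 :=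
          pow_le_pow_left₀ (norm_nonneg _) hb 2
        have h2 : (K * Afac α k * (‖k‖ * Real.sqrt (1+‖x‖^2)))^2
            = (K * Afac α k * ‖k‖)^2 * (1+‖x‖^2) := by
          rw [show K * Afac α k * (‖k‖ * Real.sqrt (1+‖x‖^2))
            = K * Afac α k * ‖k‖ * Real.sqrt (1+‖x‖^2) by ring, mul_pow,
            Real.sq_sqrt hp.le]
        calc ‖GPF α ε η θ x k lam j‖^2 * (1 + ‖x‖^2)⁻¹
            ≤ ((K * Afac α k * ‖k‖)^2 * (1+‖x‖^2)) * (1 + ‖x‖^2)⁻¹ := by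
              apply mul_le_mul_of_nonneg_right _ (inv_nonneg.mpr hp.le)
              rw [← h2]; exact h1
          _ = (K * Afac α k * ‖k‖)^2 := by field_simp
      have hAfac : Afac α k = D * ((2*‖k‖) ^ (-(1:ℝ)/2)) := rfl
      have hRsq : ((2*‖k‖) ^ (-(1:ℝ)/2))^2 = (2*‖k‖)⁻¹ := by
        rw [← Real.rpow_natCast ((2*‖k‖) ^ (-(1:ℝ)/2)) 2,
          ← Real.rpow_mul (by positivity : (0:ℝ) ≤ 2*‖k‖)]
        norm_num
        rw [Real.rpow_neg_one, mul_inv]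
        ring
      have hzpow : ‖k‖^m * ‖k‖ ≤ s^n := by
        have e1 : (‖k‖:ℝ)^m * ‖k‖ = ‖k‖^(m+1) := (zpow_add_one₀ (ne_of_gt hk0) m).symm
        have e2 : (m+1 : ℤ) = (n:ℤ) := by rw [hn]; ring
        rw [e1, e2, zpow_natCast]
        exact pow_le_pow_left₀ (norm_nonneg k) hks n
      calc ‖k‖ ^ m * ‖GPF α ε η θ x k lam j‖ ^ 2 * (1 + ‖x‖ ^ 2)⁻¹
          = ‖k‖ ^ m * (‖GPF α ε η θ x k lam j‖ ^ 2 * (1 + ‖x‖ ^ 2)⁻¹) := by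
            ring
        _ ≤ ‖k‖ ^ m * (K * Afac α k * ‖k‖)^2 :=
            mul_le_mul_of_nonneg_left habs2 (zpow_nonneg (norm_nonneg k) m)
        _ = K^2 * D^2 / 2 * (‖k‖^m * ‖k‖) := by
            rw [hAfac, show (K * (D * ((2*‖k‖) ^ (-(1:ℝ)/2))) * ‖k‖)^2
              = K^2 * D^2 * (((2*‖k‖) ^ (-(1:ℝ)/2))^2) * ‖k‖^2 by ring, hRsq]
            field_simp
        _ ≤ K^2 * D^2 / 2 * s^n :=
            mul_le_mul_of_nonneg_left hzpow (by positivity)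
        _ = c := hc.symm
    have hf0 : 0 ≤ᵐ[volume.restrict Ann]
        fun k => ‖k‖ ^ m * ‖GPF α ε η θ x k lam j‖ ^ 2 * (1 + ‖x‖ ^ 2)⁻¹ := by
      apply Filter.Eventually.of_forall
      intro k
      have h1 : (0:ℝ) ≤ ‖k‖ ^ m := zpow_nonneg (norm_nonneg k) m
      positivity
    have hgi : Integrable (fun _ : R3 => c) (volume.restrict Ann) :=
      integrableOn_const (lt_of_le_of_lt (measure_mono hsub)
        measure_closedBall_lt_top).ne
    calc (∫ k in Ann, ‖k‖ ^ m * ‖GPF α ε η θ x k lam j‖ ^ 2 * (1 + ‖x‖ ^ 2)⁻¹)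
        ≤ ∫ _ in Ann, c := integral_mono_of_nonneg hf0 hgi hbound
      _ = (volume Ann).toReal * c := by rw [setIntegral_const, smul_eq_mul]; rfl
      _ ≤ (4/3 * Real.pi * s^3) * c :=
          mul_le_mul_of_nonneg_right hV hc0
      _ = c * (4/3 * Real.pi * s^3) := by ring
  -- sum over polarizations and final numeric estimate
  have hsum : (∑ lam : Fin 2, ∫ k in Ann,
      ‖k‖ ^ m * ‖GPF α ε η θ x k lam j‖ ^ 2 * (1 + ‖x‖ ^ 2)⁻¹)
      ≤ 2 * (c * (4/3 * Real.pi * s^3)) := by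
    rw [Fin.sum_univ_two]
    linarith [hlam 0, hlam 1]
  refine le_trans hsum ?_
  have hspow : (s:ℝ)^(m+4) = s^(n+3 : ℕ) := by
    rw [hn, show (n:ℤ) - 1 + 4 = ((n+3 : ℕ) : ℤ) by push_cast; ring, zpow_natCast]
  have hD2 : D^2 = α^3 * Real.exp (1/15) / (2*Real.pi)^3 := by
    rw [hD, mul_pow, div_pow]
    rw [← Real.rpow_natCast (α ^ ((3:ℝ)/2)) 2, ← Real.rpow_mul hα0.le]
    rw [← Real.rpow_natCast ((2*Real.pi) ^ ((3:ℝ)/2)) 2,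
      ← Real.rpow_mul (by positivity : (0:ℝ) ≤ 2*Real.pi)]
    norm_num
    rw [sq, ← Real.exp_add, show (1/30:ℝ) + 1/30 = 1/15 by norm_num]
    ring
  have hC'2 : C' η ^ 2 = 3 * CA^2 * (4 + 4 * supD η + 2 * supD2 η)^2 := by
    rw [C', mul_pow, mul_pow, Real.sq_sqrt (by norm_num : (0:ℝ) ≤ 3)]
  have hcoeff := coeff_ineq η hη
  have hπ0 : (0:ℝ) < Real.pi := Real.pi_pos
  rw [hspow, hC'2]
  have key : 2 * (c * (4/3 * Real.pi * s^3)) =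
      K^2 * Real.exp (1/15) * (α^3 * s^(n+3 : ℕ)) / (6 * Real.pi^2) := by
    rw [hc, hD2, pow_add, show (2*Real.pi)^3 = 8*Real.pi^3 by ring]
    field_simp
    ring
  rw [key, div_le_iff₀ (by positivity : (0:ℝ) < 6 * Real.pi^2)]
  calc K^2 * Real.exp (1/15) * (α^3 * s^(n+3 : ℕ))
      ≤ (18 * Real.pi^2 * CA^2 * (4 + 4 * supD η + 2 * supD2 η)^2) *
          (α^3 * s^(n+3 : ℕ)) := mul_le_mul_of_nonneg_right hcoeff (by positivity)
    _ = α ^ 3 * (3 * CA^2 * (4 + 4 * supD η + 2 * supD2 η)^2) * s^(n+3 : ℕ) *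
          (6 * Real.pi^2) := by ring

end
end
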